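/- arXiv:2011.14859 — 6 statements merged into one kernel-verified Lean document; each statement's English description precedes it below -/
import Mathlib

section
/- Let η₁ > 0 and η₂, η₃ ≥ 0 with η₁η₂ ≤ η₃. If (C_p*, C_q*, A*) is an optimal solution of the convex problem minimizing (1/2)‖X − X(C_p − C_q)‖_F² + (η₁/2)‖(C_p + C_q) − η₂A‖_F² + η₃‖C_p + C_q‖₁ over C_p, C_q nonnegative with zero diagonal and A doubly stochastic, then the supports of C_p* and C_q* are disjoint: there is no index (i,j) with both (C_p*)_{ij} > 0 and (C_q*)_{ij} > 0. -/
/-- The J-DSSC objective. -/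
noncomputable def jdsscObj {d n : ℕ} (X : Matrix (Fin d) (Fin n) ℝ)
    (η₁ η₂ η₃ : ℝ) (Cp Cq A : Matrix (Fin n) (Fin n) ℝ) : ℝ :=
  (1/2) * ∑ i, ∑ j, ((X - X * (Cp - Cq)) i j)^2
    + (η₁/2) * ∑ i, ∑ j, ((Cp + Cq - η₂ • A) i j)^2
    + η₃ * ∑ i, ∑ j, |(Cp + Cq) i j|

/-- Feasibility for J-DSSC: `Cp, Cq` nonnegative with zero diagonal, `A` doubly stochastic. -/
def jdsscFeas {n : ℕ} (Cp Cq A : Matrix (Fin n) (Fin n) ℝ) : Prop :=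
  (∀ i j, 0 ≤ Cp i j) ∧ (∀ i, Cp i i = 0) ∧
  (∀ i j, 0 ≤ Cq i j) ∧ (∀ i, Cq i i = 0) ∧
  (∀ i j, 0 ≤ A i j) ∧ (∀ i, ∑ j, A i j = 1) ∧ (∀ j, ∑ i, A i j = 1)

/-! Shift mass `m = min (Cp i j) (Cq i j)` off the entry `(i, j)` of both `Cp` and `Cq`. This keeps
feasibility (the entry is off-diagonal) and leaves `Cp - Cq`, hence the data term, unchanged; the
`ℓ₁` term drops by `2 m η₃`, while the coupling term rises by less than `2 m η₁ η₂ A_ij ≤ 2 m η₁ η₂`.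
So the objective strictly decreases whenever `η₁ η₂ ≤ η₃`, contradicting optimality. -/

open Matrix

section SingleEntry

variable {ι κ α β : Type*} [Fintype ι] [Fintype κ] [DecidableEq ι] [DecidableEq κ]

theorem Matrix.sum_sum_single_apply [AddCommMonoid β] (i : ι) (j : κ) (x : β) :
    ∑ a, ∑ b, single i j x a b = x := by
  simp [single_apply, ite_and]

theorem Matrix.sum_sum_comp_sub_single [AddGroup α] [AddCommGroup β] (f : α → β)
    (M : Matrix ι κ α) (i : ι) (j : κ) (c : α) :
    ∑ a, ∑ b, f ((M - single i j c) a b) = ∑ a, ∑ b, f (M a b) + (f (M i j - c) - f (M i j)) := by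
  have hdiff : ∀ a b, f ((M - single i j c) a b) - f (M a b) =
      single i j (f (M i j - c) - f (M i j)) a b := by
    intro a b
    by_cases h : i = a ∧ j = b
    · obtain ⟨rfl, rfl⟩ := h
      simp
    · simp [h]
  rw [← sum_sum_single_apply i j (f (M i j - c) - f (M i j))]
  simp_rw [← hdiff, Finset.sum_sub_distrib]
  abel

end SingleEntry

section Perturbation

variable {n : ℕ}

theorem jdsscFeas_sub_single {Cp Cq A : Matrix (Fin n) (Fin n) ℝ} (h : jdsscFeas Cp Cq A)
    {i j : Fin n} (hij : i ≠ j) {m : ℝ} (hp : m ≤ Cp i j) (hq : m ≤ Cq i j) :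
    jdsscFeas (Cp - single i j m) (Cq - single i j m) A := by
  obtain ⟨hCp, hCpd, hCq, hCqd, hA⟩ := h
  have nonneg : ∀ C : Matrix (Fin n) (Fin n) ℝ, (∀ a b, 0 ≤ C a b) → m ≤ C i j →
      ∀ a b, 0 ≤ (C - single i j m) a b := by
    intro C hC hm a b
    by_cases hab : i = a ∧ j = b
    · obtain ⟨rfl, rfl⟩ := hab
      simpa using hm
    · simpa [hab] using hC a b
  have diag : ∀ C : Matrix (Fin n) (Fin n) ℝ, (∀ a, C a a = 0) → ∀ a, (C - single i j m) a a = 0 :=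
    fun C hC a => by
      simp only [Matrix.sub_apply, hC a, single_apply, zero_sub, neg_eq_zero, ite_eq_right_iff]
      rintro ⟨rfl, rfl⟩
      exact absurd rfl hij
  exact ⟨nonneg Cp hCp hp, diag Cp hCpd, nonneg Cq hCq hq, diag Cq hCqd, hA⟩

theorem jdsscObj_sub_single {d : ℕ} (X : Matrix (Fin d) (Fin n) ℝ) (η₁ η₂ η₃ : ℝ)
    (Cp Cq A : Matrix (Fin n) (Fin n) ℝ) (i j : Fin n) {m : ℝ} (hm : 0 ≤ m)
    (hs : 2 * m ≤ Cp i j + Cq i j) :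
    jdsscObj X η₁ η₂ η₃ (Cp - single i j m) (Cq - single i j m) A =
      jdsscObj X η₁ η₂ η₃ Cp Cq A - 2 * m * (η₁ * (Cp i j + Cq i j - m - η₂ * A i j) + η₃) := by
  have hsum : Cp - single i j m + (Cq - single i j m) = Cp + Cq - single i j (2 * m) := by
    rw [two_mul, single_add]; abel
  have hshift : Cp - single i j m + (Cq - single i j m) - η₂ • A =
      Cp + Cq - η₂ • A - single i j (2 * m) := by
    rw [hsum]; abel
  unfold jdsscObj
  rw [sub_sub_sub_cancel_right, hshift, hsum, sum_sum_comp_sub_single (· ^ 2),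
    sum_sum_comp_sub_single (|·|)]
  simp only [Matrix.sub_apply, Matrix.add_apply, Matrix.smul_apply, smul_eq_mul]
  rw [abs_of_nonneg (by linarith), abs_of_nonneg (by linarith)]
  ring

end Perturbation

theorem jdssc_disjoint_supports_general {d n : ℕ} (X : Matrix (Fin d) (Fin n) ℝ)
    (η₁ η₂ η₃ : ℝ) (hη₁ : 0 < η₁) (hη₂ : 0 ≤ η₂)
    (hle : η₁ * η₂ ≤ η₃)
    (Cp Cq A : Matrix (Fin n) (Fin n) ℝ)
    (hfeas : jdsscFeas Cp Cq A)
    (hopt : ∀ Cp' Cq' A' : Matrix (Fin n) (Fin n) ℝ, jdsscFeas Cp' Cq' A' →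
      jdsscObj X η₁ η₂ η₃ Cp Cq A ≤ jdsscObj X η₁ η₂ η₃ Cp' Cq' A') :
    ¬ ∃ i j, 0 < Cp i j ∧ 0 < Cq i j := by
  rintro ⟨i, j, hp, hq⟩
  set m := min (Cp i j) (Cq i j)
  have hm : 0 < m := lt_min hp hq
  have hs : 2 * m ≤ Cp i j + Cq i j := by
    linarith [min_le_left (Cp i j) (Cq i j), min_le_right (Cp i j) (Cq i j)]
  have hij : i ≠ j := by
    rintro rfl
    exact hp.ne' (hfeas.2.1 i)
  have hA : A ∈ doublyStochastic ℝ (Fin n) := mem_doublyStochastic_iff_sum.2 hfeas.2.2.2.2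
  have hcoupling : η₁ * (η₂ * A i j) ≤ η₃ :=
    calc η₁ * (η₂ * A i j) ≤ η₁ * η₂ := by
          gcongr
          exact mul_le_of_le_one_right hη₂ (le_one_of_mem_doublyStochastic hA)
      _ ≤ η₃ := hle
  have hgain : 0 < η₁ * (Cp i j + Cq i j - m - η₂ * A i j) + η₃ := by
    nlinarith [mul_pos hη₁ hm]
  have hopt' := hopt _ _ A (jdsscFeas_sub_single hfeas hij (min_le_left _ _) (min_le_right _ _))
  rw [jdsscObj_sub_single X η₁ η₂ η₃ Cp Cq A i j hm.le hs] at hopt'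
  linarith [mul_pos (by positivity : (0 : ℝ) < 2 * m) hgain]

/-- If `η₁ η₂ ≤ η₃`, any optimal solution of the J-DSSC relaxation has
`Cp*` and `Cq*` with disjoint supports. -/
theorem jdssc_disjoint_supports {d n : ℕ} (X : Matrix (Fin d) (Fin n) ℝ)
    (η₁ η₂ η₃ : ℝ) (hη₁ : 0 < η₁) (hη₂ : 0 ≤ η₂) (hη₃ : 0 ≤ η₃)
    (hle : η₁ * η₂ ≤ η₃)
    (Cp Cq A : Matrix (Fin n) (Fin n) ℝ)
    (hfeas : jdsscFeas Cp Cq A)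
    (hopt : ∀ Cp' Cq' A' : Matrix (Fin n) (Fin n) ℝ, jdsscFeas Cp' Cq' A' →
      jdsscObj X η₁ η₂ η₃ Cp Cq A ≤ jdsscObj X η₁ η₂ η₃ Cp' Cq' A') :
    ¬ ∃ i j, 0 < Cp i j ∧ 0 < Cq i j :=
  jdssc_disjoint_supports_general X η₁ η₂ η₃ hη₁ hη₂ hle Cp Cq A hfeas hopt
end

section
/- Let η₁ > 0 and η₂, η₃ ≥ 0, and let (C_p*, C_q*, A*) be an optimal solution of the convex problem minimizing (1/2)‖X − X(C_p − C_q)‖_F² + (η₁/2)‖(C_p + C_q) − η₂A‖_F² + η₃‖C_p + C_q‖₁ subject to A ∈ Ω_n and C_p, C_q nonnegative with zero diagonal. Then at any index (i,j) where (C_p*)_{ij} > 0 and (C_q*)_{ij} > 0, it holds that max((C_p*)_{ij}, (C_q*)_{ij}) < (η₁η₂ − η₃)/η₁. -/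
open Filter Topology Matrix

lemma Matrix.sum_sum_add_single_sub {m n α β : Type*} [Fintype m] [Fintype n] [DecidableEq m]
    [DecidableEq n] [AddZeroClass α] [AddCommGroup β] (φ : α → β) (M : Matrix m n α)
    (a : m) (b : n) (c : α) :
    ∑ x, ∑ y, φ ((M + single a b c) x y) - ∑ x, ∑ y, φ (M x y) = φ (M a b + c) - φ (M a b) := by
  simp only [← Finset.sum_sub_distrib]
  rw [Fintype.sum_eq_single a, Fintype.sum_eq_single b]
  · simp
  · intro y hy
    simp [single_apply_of_col_ne a a (Ne.symm hy)]
  · intro x hx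
    simp [single_apply_of_row_ne (Ne.symm hx)]

lemma Matrix.sub_single_nonneg_and_diag_eq_zero {ι : Type*} [DecidableEq ι]
    {M : Matrix ι ι ℝ} (h0 : ∀ x y, 0 ≤ M x y) (hdiag : ∀ x, M x x = 0) {i j : ι} (hij : i ≠ j)
    {ε : ℝ} (hε : ε ≤ M i j) :
    (∀ x y, 0 ≤ (M - single i j ε) x y) ∧ ∀ x, (M - single i j ε) x x = 0 := by
  refine ⟨fun x y => ?_, fun x => ?_⟩
  · by_cases hxy : i = x ∧ j = y
    · obtain ⟨rfl, rfl⟩ := hxy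
      simpa using hε
    · simpa [single_apply_of_ne (h := hxy)] using h0 x y
  · have hxx : ¬(i = x ∧ j = x) := fun h => hij (h.1.trans h.2.symm)
    simp [single_apply_of_ne (h := hxx), hdiag x]

lemma jdsscFeas.sub_single {n : ℕ} {Cp Cq A : Matrix (Fin n) (Fin n) ℝ}
    (h : jdsscFeas Cp Cq A) {i j : Fin n} (hij : i ≠ j) {ε : ℝ} (hp : ε ≤ Cp i j)
    (hq : ε ≤ Cq i j) : jdsscFeas (Cp - single i j ε) (Cq - single i j ε) A := by
  obtain ⟨hCp0, hCpd, hCq0, hCqd, hA⟩ := h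
  obtain ⟨hCp0', hCpd'⟩ := sub_single_nonneg_and_diag_eq_zero hCp0 hCpd hij hp
  obtain ⟨hCq0', hCqd'⟩ := sub_single_nonneg_and_diag_eq_zero hCq0 hCqd hij hq
  exact ⟨hCp0', hCpd', hCq0', hCqd', hA⟩

lemma jdsscObj_sub_single_sub {d n : ℕ} (X : Matrix (Fin d) (Fin n) ℝ) (η₁ η₂ η₃ : ℝ)
    (Cp Cq A : Matrix (Fin n) (Fin n) ℝ) (i j : Fin n) (ε : ℝ) :
    jdsscObj X η₁ η₂ η₃ (Cp - single i j ε) (Cq - single i j ε) A - jdsscObj X η₁ η₂ η₃ Cp Cq A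
      = η₁ / 2 * ((Cp i j + Cq i j - η₂ * A i j - 2 * ε) ^ 2
          - (Cp i j + Cq i j - η₂ * A i j) ^ 2)
        + η₃ * (|Cp i j + Cq i j - 2 * ε| - |Cp i j + Cq i j|) := by
  have hdiff : Cp - single i j ε - (Cq - single i j ε) = Cp - Cq := sub_sub_sub_cancel_right _ _ _
  have hsum : Cp - single i j ε + (Cq - single i j ε) = Cp + Cq + single i j (-(2 * ε)) := by
    ext x y
    by_cases h : i = x ∧ j = y
    · obtain ⟨rfl, rfl⟩ := h
      simp only [Matrix.add_apply, Matrix.sub_apply, single_apply_same]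
      ring
    · simp [single_apply_of_ne (h := h)]
  have hresidual : Cp - single i j ε + (Cq - single i j ε) - η₂ • A
      = Cp + Cq - η₂ • A + single i j (-(2 * ε)) := by
    rw [hsum]
    abel
  have h2 := sum_sum_add_single_sub (· ^ 2) (Cp + Cq - η₂ • A) i j (-(2 * ε))
  have h3 := sum_sum_add_single_sub (|·|) (Cp + Cq) i j (-(2 * ε))
  have e2 : (Cp + Cq - η₂ • A) i j = Cp i j + Cq i j - η₂ * A i j := rfl
  have e3 : (Cp + Cq) i j = Cp i j + Cq i j := rfl
  rw [e2] at h2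
  rw [e3] at h3
  rw [jdsscObj, jdsscObj, hdiff, hresidual, hsum]
  linear_combination (η₁ / 2) * h2 + η₃ * h3

lemma nonpos_of_forall_le_mul {c k m : ℝ} (hm : 0 < m)
    (h : ∀ ε, 0 < ε → ε ≤ m → c ≤ k * ε) : c ≤ 0 := by
  have hlim : Tendsto (fun ε => k * ε) (𝓝[>] 0) (𝓝 0) := by
    simpa using ((continuous_const_mul k).tendsto 0).mono_left nhdsWithin_le_nhds
  refine ge_of_tendsto hlim ?_
  filter_upwards [Ioc_mem_nhdsGT hm] with ε hε using h ε hε.1 hε.2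

lemma jdsscObj_optimal_entry_le {d n : ℕ} (X : Matrix (Fin d) (Fin n) ℝ) (η₁ η₂ η₃ : ℝ)
    {Cp Cq A : Matrix (Fin n) (Fin n) ℝ} (hfeas : jdsscFeas Cp Cq A)
    (hopt : ∀ Cp' Cq' A' : Matrix (Fin n) (Fin n) ℝ, jdsscFeas Cp' Cq' A' →
      jdsscObj X η₁ η₂ η₃ Cp Cq A ≤ jdsscObj X η₁ η₂ η₃ Cp' Cq' A')
    {i j : Fin n} (hp : 0 < Cp i j) (hq : 0 < Cq i j) :
    η₁ * (Cp i j + Cq i j) + η₃ ≤ η₁ * η₂ * A i j := by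
  have hij : i ≠ j := by
    rintro rfl
    exact hp.ne' (hfeas.2.1 i)
  suffices η₁ * (Cp i j + Cq i j - η₂ * A i j) + η₃ ≤ 0 by linarith
  refine nonpos_of_forall_le_mul (k := η₁) (lt_min hp hq) fun ε hε hεm => ?_
  have hεp : ε ≤ Cp i j := hεm.trans (min_le_left _ _)
  have hεq : ε ≤ Cq i j := hεm.trans (min_le_right _ _)
  have hdecr := sub_nonneg.2 (hopt _ _ A (hfeas.sub_single hij hεp hεq))
  rw [jdsscObj_sub_single_sub, abs_of_nonneg (by linarith), abs_of_nonneg (by linarith)] at hdecr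
  have hfactor : 0 ≤ 2 * ε * (η₁ * ε - (η₁ * (Cp i j + Cq i j - η₂ * A i j) + η₃)) := by
    linarith
  linarith [nonneg_of_mul_nonneg_right hfactor (by linarith)]

theorem jdssc_overlap_bound_general {d n : ℕ} (X : Matrix (Fin d) (Fin n) ℝ)
    (η₁ η₂ η₃ : ℝ) (hη₁ : 0 < η₁) (hη₂ : 0 ≤ η₂)
    (Cp Cq A : Matrix (Fin n) (Fin n) ℝ)
    (hfeas : jdsscFeas Cp Cq A)
    (hopt : ∀ Cp' Cq' A' : Matrix (Fin n) (Fin n) ℝ, jdsscFeas Cp' Cq' A' →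
      jdsscObj X η₁ η₂ η₃ Cp Cq A ≤ jdsscObj X η₁ η₂ η₃ Cp' Cq' A') :
    ∀ i j, 0 < Cp i j → 0 < Cq i j →
      max (Cp i j) (Cq i j) < (η₁ * η₂ - η₃) / η₁ := by
  intro i j hp hq
  have hentry := jdsscObj_optimal_entry_le X η₁ η₂ η₃ hfeas hopt hp hq
  have hA : A i j ≤ 1 :=
    le_one_of_mem_doublyStochastic (mem_doublyStochastic_iff_sum.2 hfeas.2.2.2.2)
  have hsum : Cp i j + Cq i j ≤ (η₁ * η₂ - η₃) / η₁ := by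
    rw [le_div_iff₀ hη₁]
    linarith [mul_le_mul_of_nonneg_left hA (mul_nonneg hη₁.le hη₂)]
  exact (max_lt (by linarith) (by linarith)).trans_le hsum

/-- At any index where the supports of optimal `Cp*` and `Cq*` overlap, both entries
are bounded by `(η₁ η₂ - η₃)/η₁`. -/
theorem jdssc_overlap_bound {d n : ℕ} (X : Matrix (Fin d) (Fin n) ℝ)
    (η₁ η₂ η₃ : ℝ) (hη₁ : 0 < η₁) (hη₂ : 0 ≤ η₂) (hη₃ : 0 ≤ η₃)
    (Cp Cq A : Matrix (Fin n) (Fin n) ℝ)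
    (hfeas : jdsscFeas Cp Cq A)
    (hopt : ∀ Cp' Cq' A' : Matrix (Fin n) (Fin n) ℝ, jdsscFeas Cp' Cq' A' →
      jdsscObj X η₁ η₂ η₃ Cp Cq A ≤ jdsscObj X η₁ η₂ η₃ Cp' Cq' A') :
    ∀ i j, 0 < Cp i j → 0 < Cq i j →
      max (Cp i j) (Cq i j) < (η₁ * η₂ - η₃) / η₁ :=
  jdssc_overlap_bound_general X η₁ η₂ η₃ hη₁ hη₂ Cp Cq A hfeas hopt
end

section
/- For integers n ≥ k ≥ 3 with k < n/2, there exists a simple graph G on n vertices with minimum degree at least k such that no doubly stochastic matrix has its support (set of nonzero entries) contained in the support of the adjacency matrix of G. -/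
/-!
Take the complete split graph on a clique `s` of `k` vertices and an independent set of the
remaining `n - k`: each vertex outside `s` sees all of `s`, each vertex of `s` sees everything.
In a doubly stochastic matrix supported on this graph, the `n - k` rows outside `s` have all
their mass, `n - k` in total, in the `k` columns of `s`, which carry mass `k` altogether;
so `n ≤ 2 * k`.
-/

open Finset Matrix

theorem card_le_card_of_mem_doublyStochastic {R ι : Type*} [Fintype ι] [DecidableEq ι]
    [Semiring R] [PartialOrder R] [IsOrderedRing R] {A : Matrix ι ι R}
    (hA : A ∈ doublyStochastic R ι) {s t : Finset ι} (hst : ∀ i ∈ s, ∀ j ∉ t, A i j = 0) :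
    (#s : R) ≤ #t :=
  calc (#s : R) = ∑ i ∈ s, ∑ j, A i j := by simp [sum_row_of_mem_doublyStochastic hA]
    _ = ∑ i ∈ s, ∑ j ∈ t, A i j := sum_congr rfl fun i hi ↦
        (sum_subset (subset_univ t) fun j _ hj ↦ hst i hi j hj).symm
    _ = ∑ j ∈ t, ∑ i ∈ s, A i j := sum_comm
    _ ≤ ∑ j ∈ t, ∑ i, A i j := sum_le_sum fun j _ ↦
        sum_le_sum_of_subset_of_nonneg (subset_univ s) fun i _ _ ↦
          nonneg_of_mem_doublyStochastic hA
    _ = #t := by simp [sum_col_of_mem_doublyStochastic hA]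

namespace SimpleGraph

variable {V : Type*}

def completeSplit (s : Finset V) : SimpleGraph V := fromRel fun i _ ↦ i ∈ s

variable {s : Finset V}

@[simp]
theorem completeSplit_adj {i j : V} : (completeSplit s).Adj i j ↔ i ≠ j ∧ (i ∈ s ∨ j ∈ s) := by
  simp [completeSplit]

variable [Fintype V] [DecidableEq V]

theorem card_le_ncard_neighborSet_completeSplit (hs : #s < Fintype.card V) (v : V) :
    #s ≤ ((completeSplit s).neighborSet v).ncard := by
  by_cases hv : v ∈ s
  · calc #s ≤ #(univ.erase v) := by rw [card_erase_of_mem (mem_univ v), card_univ]; omega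
      _ ≤ _ := by
        rw [← Set.ncard_coe_finset]
        exact Set.ncard_le_ncard fun w hw ↦ by simp_all [eq_comm]
  · rw [← Set.ncard_coe_finset]
    exact Set.ncard_le_ncard fun w hw ↦ by
      simp only [mem_coe] at hw
      simp [hw, ne_of_mem_of_not_mem hw hv |>.symm]

theorem card_le_two_mul_card_of_mem_doublyStochastic_completeSplit {R : Type*} [Semiring R]
    [PartialOrder R] [IsStrictOrderedRing R] {A : Matrix V V R} (hA : A ∈ doublyStochastic R V)
    (hsupp : ∀ i j, A i j ≠ 0 → (completeSplit s).Adj i j) :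
    Fintype.card V ≤ 2 * #s := by
  have hcard : (#sᶜ : R) ≤ #s := card_le_card_of_mem_doublyStochastic hA fun i hi j hj ↦ by
    by_contra h
    simp only [mem_compl] at hi
    have := (completeSplit_adj.1 (hsupp i j h)).2
    tauto
  rw [card_compl] at hcard
  have := Nat.cast_le.1 hcard
  omega

end SimpleGraph

theorem exists_graph_min_degree_no_doubly_stochastic_general (n k : ℕ)
    (hhalf : 2 * k < n) :
    ∃ G : SimpleGraph (Fin n),
      (∀ v, k ≤ (G.neighborSet v).ncard) ∧
      ¬ ∃ A : Matrix (Fin n) (Fin n) ℝ,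
        (∀ i j, 0 ≤ A i j) ∧ (∀ i, ∑ j, A i j = 1) ∧ (∀ j, ∑ i, A i j = 1) ∧
        (∀ i j, A i j ≠ 0 → G.Adj i j) := by
  set s : Finset (Fin n) := {i | i < k}
  have hs : #s = k := by simp only [s, Fin.card_filter_val_lt, inf_eq_right]; omega
  have hsn : #s < Fintype.card (Fin n) := by simp only [hs, Fintype.card_fin]; omega
  refine ⟨.completeSplit s,
    fun v ↦ hs ▸ SimpleGraph.card_le_ncard_neighborSet_completeSplit hsn v, ?_⟩
  rintro ⟨A, hpos, hrow, hcol, hsupp⟩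
  have hn := SimpleGraph.card_le_two_mul_card_of_mem_doublyStochastic_completeSplit
    (mem_doublyStochastic_iff_sum.2 ⟨hpos, hrow, hcol⟩) hsupp
  simp only [Fintype.card_fin, hs] at hn
  omega

/-- For `n ≥ k ≥ 3` with `k < n/2` there is a graph on `n` vertices with minimum
degree at least `k` whose support contains no doubly stochastic matrix. -/
theorem exists_graph_min_degree_no_doubly_stochastic (n k : ℕ)
    (hk3 : 3 ≤ k) (hkn : k ≤ n) (hhalf : 2 * k < n) :
    ∃ G : SimpleGraph (Fin n),
      (∀ v, k ≤ (G.neighborSet v).ncard) ∧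
      ¬ ∃ A : Matrix (Fin n) (Fin n) ℝ,
        (∀ i j, 0 ≤ A i j) ∧ (∀ i, ∑ j, A i j = 1) ∧ (∀ j, ∑ i, A i j = 1) ∧
        (∀ i j, A i j ≠ 0 → G.Adj i j) :=
  exists_graph_min_degree_no_doubly_stochastic_general n k hhalf
end

section
/- For integers n ≥ k ≥ 3 with k ≥ n/2, every simple graph on n vertices with minimum degree at least k contains in its support a doubly stochastic matrix; i.e., there exists a doubly stochastic matrix A with A_{ij} = 0 whenever {i,j} is not an edge of G. -/
/-!
By Hall's theorem there is a permutation `σ` with `v ~ σ v` for every vertex `v` as soon as every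
vertex set `S` has at least `|S|` neighbours; the permutation matrix of `σ` is then doubly
stochastic and supported on `G`. If `|S| ≤ k`, a single vertex of `S` already has `k` neighbours.
If `|S| > k`, then `|Sᶜ| < n - k ≤ k`, so no vertex has all its neighbours outside `S`, and every
vertex is a neighbour of `S`.
-/

open Finset

namespace SimpleGraph

variable {V : Type*} [Fintype V] {G : SimpleGraph V} [DecidableRel G.Adj]

lemma degree_eq_ncard_neighborSet (v : V) : G.degree v = (G.neighborSet v).ncard := by
  rw [Set.ncard_eq_toFinset_card', ← neighborFinset_def, card_neighborFinset_eq_degree]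

lemma exists_adj_mem_of_card_compl_lt_degree [DecidableEq V] {s : Finset V}
    (h : ∀ v, #sᶜ < G.degree v) (v : V) : ∃ u ∈ s, G.Adj u v := by
  by_contra! hv
  have hsub : G.neighborFinset v ⊆ sᶜ := fun u hu =>
    mem_compl.2 fun hus => hv u hus ((mem_neighborFinset G v u).1 hu).symm
  exact (h v).not_ge (card_neighborFinset_eq_degree G v ▸ card_le_card hsub)

lemma card_le_card_filter_exists_adj {k : ℕ} (hdeg : ∀ v, k ≤ G.degree v)
    (hcard : Fintype.card V ≤ 2 * k) (s : Finset V) :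
    #s ≤ #{v | ∃ u ∈ s, G.Adj u v} := by
  classical
  rcases le_or_gt #s k with hsk | hks
  · rcases s.eq_empty_or_nonempty with rfl | ⟨u, hu⟩
    · simp
    have hsub : G.neighborFinset u ⊆ ({v | ∃ u ∈ s, G.Adj u v} : Finset V) := fun v hv =>
      mem_filter.2 ⟨mem_univ v, u, hu, (mem_neighborFinset G u v).1 hv⟩
    calc #s ≤ k := hsk
      _ ≤ G.degree u := hdeg u
      _ = #(G.neighborFinset u) := (card_neighborFinset_eq_degree G u).symm
      _ ≤ _ := card_le_card hsub
  · have hcompl : ∀ v, #sᶜ < G.degree v := fun v => by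
      have hkv := hdeg v
      have hs := card_le_univ s
      rw [card_compl]
      omega
    have huniv : ({v | ∃ u ∈ s, G.Adj u v} : Finset V) = univ :=
      eq_univ_of_forall fun v =>
        mem_filter.2 ⟨mem_univ v, exists_adj_mem_of_card_compl_lt_degree hcompl v⟩
    rw [huniv]
    exact card_le_univ s

lemma exists_perm_adj {k : ℕ} (hdeg : ∀ v, k ≤ G.degree v) (hcard : Fintype.card V ≤ 2 * k) :
    ∃ σ : Equiv.Perm V, ∀ v, G.Adj v (σ v) := by
  obtain ⟨f, hf, hadj⟩ := (Fintype.all_card_le_filter_rel_iff_exists_injective G.Adj).1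
    (card_le_card_filter_exists_adj hdeg hcard)
  exact ⟨Equiv.ofBijective f (Finite.injective_iff_bijective.1 hf), hadj⟩

end SimpleGraph

lemma Equiv.Perm.permMatrix_apply_eq_zero {n R : Type*} [DecidableEq n] [Zero R] [One R]
    {σ : Equiv.Perm n} {i j : n} (h : σ i ≠ j) : σ.permMatrix R i j = 0 := by
  simp [h]

theorem min_degree_half_exists_doubly_stochastic_general (n k : ℕ)
    (hhalf : n ≤ 2 * k)
    (G : SimpleGraph (Fin n))
    (hdeg : ∀ v, k ≤ (G.neighborSet v).ncard) :
    ∃ A : Matrix (Fin n) (Fin n) ℝ,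
      (∀ i j, 0 ≤ A i j) ∧ (∀ i, ∑ j, A i j = 1) ∧ (∀ j, ∑ i, A i j = 1) ∧
      (∀ i j, ¬ G.Adj i j → A i j = 0) := by
  classical
  obtain ⟨σ, hσ⟩ := SimpleGraph.exists_perm_adj
    (fun v => (G.degree_eq_ncard_neighborSet v).symm ▸ hdeg v) (by simpa using hhalf)
  have hA : σ.permMatrix ℝ ∈ doublyStochastic ℝ (Fin n) := permMatrix_mem_doublyStochastic
  exact ⟨σ.permMatrix ℝ, fun _ _ => nonneg_of_mem_doublyStochastic hA,
    sum_row_of_mem_doublyStochastic hA, sum_col_of_mem_doublyStochastic hA,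
    fun i j hij => Equiv.Perm.permMatrix_apply_eq_zero fun h => hij (h ▸ hσ i)⟩

/-- For `n ≥ k ≥ 3` with `k ≥ n/2`, every graph on `n` vertices with minimum degree
at least `k` contains a doubly stochastic matrix in its support. -/
theorem min_degree_half_exists_doubly_stochastic (n k : ℕ)
    (hk3 : 3 ≤ k) (hkn : k ≤ n) (hhalf : n ≤ 2 * k)
    (G : SimpleGraph (Fin n))
    (hdeg : ∀ v, k ≤ (G.neighborSet v).ncard) :
    ∃ A : Matrix (Fin n) (Fin n) ℝ,
      (∀ i j, 0 ≤ A i j) ∧ (∀ i, ∑ j, A i j = 1) ∧ (∀ j, ∑ i, A i j = 1) ∧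
      (∀ i j, ¬ G.Adj i j → A i j = 0) :=
  min_degree_half_exists_doubly_stochastic_general n k hhalf G hdeg
end

section
/- Strong duality for the doubly stochastic projection: for γ > 0 and M ∈ ℝ^{n×n}, min over A ∈ Ω_n of ⟨−M, A⟩ + (γ/2)‖A‖_F² equals max over α, β ∈ ℝⁿ of −1ᵀ(α + β) − (1/(2γ))‖[M − α1ᵀ − 1βᵀ]₊‖_F², where [·]₊ is entrywise positive part. -/
def IsDoublyStochastic {n : ℕ} (A : Matrix (Fin n) (Fin n) ℝ) : Prop :=
  (∀ i j, 0 ≤ A i j) ∧ (∀ i, ∑ j, A i j = 1) ∧ (∀ j, ∑ i, A i j = 1)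

/-!
Entrywise Fenchel–Young, `c * a ≤ γ / 2 * a ^ 2 + [c]₊ ^ 2 / (2 * γ)` for `a ≥ 0` with
equality at `a = [c]₊ / γ`, writes primal minus dual as a sum of nonnegative gaps, one per
entry, with `c = M i j - α i - β j`. Strong duality therefore reduces to finding `α, β` for which
`[M - α 1ᵀ - 1 βᵀ]₊ / γ` is doubly stochastic. Maximisers of the dual do this: the dual is
invariant under `(α, β) ↦ (α - t, β + t)`, and comparing with the uniform matrix bounds every
`α i + β j` on a superlevel set, so a maximum is attained on a compact ball; there, the
first-order condition in `α i` (resp. `β j`) says that row `i` (resp. column `j`) of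
`[M - α 1ᵀ - 1 βᵀ]₊` sums to `γ`.
-/

open Finset Matrix

noncomputable def fenchelGap (γ a c : ℝ) : ℝ :=
  γ / 2 * a ^ 2 - c * a + 1 / (2 * γ) * max c 0 ^ 2

section Scalar

variable {γ : ℝ}

lemma fenchelGap_eq_sq_div (hγ : γ ≠ 0) (a c : ℝ) (hc : 0 ≤ c) :
    fenchelGap γ a c = (γ * a - c) ^ 2 / (2 * γ) := by
  rw [fenchelGap, max_eq_left hc]
  field_simp
  ring

lemma fenchelGap_nonneg (hγ : 0 < γ) {a : ℝ} (ha : 0 ≤ a) (c : ℝ) :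
    0 ≤ fenchelGap γ a c := by
  rcases le_total c 0 with hc | hc
  · rw [fenchelGap, max_eq_right hc]
    nlinarith
  · rw [fenchelGap_eq_sq_div hγ.ne' a c hc]
    positivity

lemma fenchelGap_posPart_div (hγ : γ ≠ 0) (c : ℝ) : fenchelGap γ (max c 0 / γ) c = 0 := by
  rcases le_total c 0 with hc | hc
  · simp [fenchelGap, max_eq_right hc]
  · rw [fenchelGap_eq_sq_div hγ _ c hc, max_eq_left hc, mul_div_cancel₀ c hγ]
    simp

lemma abs_le_of_fenchelGap_le (hγ : 0 < γ) {a c G : ℝ} (ha : 0 < a)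
    (h : fenchelGap γ a c ≤ G) : |c| ≤ G / a + γ * a + 1 + 2 * γ * G := by
  have hG : 0 ≤ G := (fenchelGap_nonneg hγ ha.le c).trans h
  have hGa : 0 ≤ G / a := div_nonneg hG ha.le
  rcases le_total c 0 with hc | hc
  · rw [fenchelGap, max_eq_right hc] at h
    have : -c ≤ G / a := by
      rw [le_div_iff₀ ha]
      nlinarith
    rw [abs_of_nonpos hc]
    nlinarith
  · rw [fenchelGap_eq_sq_div hγ.ne' a c hc, div_le_iff₀ (by positivity)] at h
    rw [abs_of_nonneg hc]
    nlinarith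

lemma posPart_sub_sq_le (x t : ℝ) :
    max (x - t) 0 ^ 2 ≤ max x 0 ^ 2 - 2 * t * max x 0 + t ^ 2 := by
  rcases le_total x 0 with hx | hx <;> rcases le_total (x - t) 0 with hxt | hxt <;>
    simp only [max_eq_left, max_eq_right, *] <;> nlinarith

lemma eq_zero_of_forall_mul_le_mul_sq {a b : ℝ} (h : ∀ t, a * t ≤ b * t ^ 2) : a = 0 := by
  by_contra ha
  have hb : 0 < |b| + 1 := by positivity
  have key := h (a / (2 * (|b| + 1)))
  have hbb : b ≤ |b| := le_abs_self b
  have ha2 : 0 < a ^ 2 := by positivity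
  rw [div_pow, mul_div_assoc'] at key
  rw [mul_div_assoc', div_le_div_iff₀ (by positivity) (by positivity)] at key
  nlinarith [mul_pos ha2 hb]

end Scalar

section FiniteSums

variable {ι κ : Type*} [Fintype ι] [Fintype κ]

lemma apply_le_of_forall_sum_le [DecidableEq ι] {g : ι → ℝ → ℝ} {x : ι → ℝ}
    (h : ∀ y : ι → ℝ, ∑ k, g k (x k) ≤ ∑ k, g k (y k)) (i : ι) (a : ℝ) :
    g i (x i) ≤ g i a := by
  have hsplit (y : ι → ℝ) : ∑ k, g k (y k) = g i (y i) + ∑ k ∈ univ.erase i, g k (y k) :=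
    (add_sum_erase _ _ (mem_univ i)).symm
  have hrest : ∑ k ∈ univ.erase i, g k (Function.update x i a k) =
      ∑ k ∈ univ.erase i, g k (x k) :=
    sum_congr rfl fun k hk => by rw [Function.update_of_ne (ne_of_mem_erase hk)]
  have hy := h (Function.update x i a)
  rw [hsplit, hsplit, Function.update_self, hrest] at hy
  linarith

lemma le_sum_sum_of_nonneg {f : ι → κ → ℝ} (hf : ∀ i j, 0 ≤ f i j) (i : ι) (j : κ) :
    f i j ≤ ∑ i, ∑ j, f i j :=
  (single_le_sum (fun j _ => hf i j) (mem_univ j)).trans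
    (single_le_sum (f := fun i => ∑ j, f i j) (fun i _ => sum_nonneg fun j _ => hf i j)
      (mem_univ i))

lemma sum_posPart_eq_of_forall_le {γ : ℝ} (hγ : 0 < γ) {d : ι → ℝ} {a₀ : ℝ}
    (h : ∀ a, a₀ + 1 / (2 * γ) * ∑ j, max (d j - a₀) 0 ^ 2 ≤
      a + 1 / (2 * γ) * ∑ j, max (d j - a) 0 ^ 2) :
    ∑ j, max (d j - a₀) 0 = γ := by
  set S := ∑ j, max (d j - a₀) 0
  have hκ : 0 < 1 / (2 * γ) := by positivity
  suffices 1 / (2 * γ) * (2 * S) - 1 = 0 by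
    field_simp at this
    linarith
  -- `[·]₊ ^ 2` has the 2-Lipschitz derivative `2 [·]₊`, so the objective at `a₀ + t` lies below a
  -- quadratic in `t`; minimality at `a₀` kills the linear coefficient.
  refine eq_zero_of_forall_mul_le_mul_sq (b := 1 / (2 * γ) * Fintype.card ι) fun t => ?_
  have hquad : ∑ j, max (d j - (a₀ + t)) 0 ^ 2 ≤
      ∑ j, max (d j - a₀) 0 ^ 2 - 2 * t * S + Fintype.card ι * t ^ 2 := by
    calc ∑ j, max (d j - (a₀ + t)) 0 ^ 2
        ≤ ∑ j, (max (d j - a₀) 0 ^ 2 - 2 * t * max (d j - a₀) 0 + t ^ 2) :=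
          sum_le_sum fun j _ => by rw [← sub_sub]; exact posPart_sub_sq_le _ _
      _ = _ := by simp only [sum_add_distrib, sum_sub_distrib, ← mul_sum, sum_const,
          card_univ, nsmul_eq_mul, S]
  linarith [h (a₀ + t), mul_le_mul_of_nonneg_left hquad hκ.le]

end FiniteSums

section Duality

variable {ι : Type*} [Fintype ι]

noncomputable def primalObjective (γ : ℝ) (M A : Matrix ι ι ℝ) : ℝ :=
  (∑ i, ∑ j, (-(M i j)) * A i j) + (γ / 2) * ∑ i, ∑ j, (A i j) ^ 2

noncomputable def dualObjective (γ : ℝ) (M : Matrix ι ι ℝ) (α β : ι → ℝ) : ℝ :=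
  (-(∑ i, (α i + β i))) - (1 / (2 * γ)) * ∑ i, ∑ j, (max (M i j - α i - β j) 0) ^ 2

noncomputable def primalOfDual (γ : ℝ) (M : Matrix ι ι ℝ) (α β : ι → ℝ) : Matrix ι ι ℝ :=
  of fun i j => max (M i j - α i - β j) 0 / γ

section WeakDuality

variable [DecidableEq ι] {γ : ℝ} (M : Matrix ι ι ℝ) {A : Matrix ι ι ℝ}

lemma primalObjective_sub_dualObjective (hA : A ∈ doublyStochastic ℝ ι) (α β : ι → ℝ) :
    primalObjective γ M A - dualObjective γ M α β =
      ∑ i, ∑ j, fenchelGap γ (A i j) (M i j - α i - β j) := by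
  have hα : ∑ i, α i = ∑ i, ∑ j, α i * A i j :=
    sum_congr rfl fun i _ => by rw [← mul_sum, sum_row_of_mem_doublyStochastic hA, mul_one]
  have hβ : ∑ j, β j = ∑ i, ∑ j, β j * A i j := by
    rw [sum_comm]
    exact sum_congr rfl fun j _ => by rw [← mul_sum, sum_col_of_mem_doublyStochastic hA, mul_one]
  simp only [primalObjective, dualObjective, fenchelGap, sum_add_distrib, sum_sub_distrib,
    mul_sum, sub_mul, neg_mul, sum_neg_distrib, hα, hβ]
  ring

lemma dualObjective_le_primalObjective (hγ : 0 < γ) (hA : A ∈ doublyStochastic ℝ ι)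
    (α β : ι → ℝ) : dualObjective γ M α β ≤ primalObjective γ M A := by
  have := primalObjective_sub_dualObjective M hA α β (γ := γ)
  have : 0 ≤ ∑ i, ∑ j, fenchelGap γ (A i j) (M i j - α i - β j) :=
    sum_nonneg fun i _ => sum_nonneg fun j _ =>
      fenchelGap_nonneg hγ (nonneg_of_mem_doublyStochastic hA) _
  linarith

end WeakDuality

section DualObjective

variable {γ : ℝ} (M : Matrix ι ι ℝ)

lemma dualObjective_shift (α β : ι → ℝ) (t : ℝ) :
    dualObjective γ M (fun i => α i - t) (fun j => β j + t) = dualObjective γ M α β := by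
  simp only [dualObjective, sub_add_add_cancel, sub_sub]

lemma dualObjective_transpose (α β : ι → ℝ) :
    dualObjective γ Mᵀ β α = dualObjective γ M α β := by
  simp only [dualObjective, transpose_apply, add_comm (β _), sub_right_comm _ (β _)]
  rw [sum_comm]

lemma dualObjective_eq_sub_sum_rows (α β : ι → ℝ) :
    dualObjective γ M α β = -(∑ j, β j) -
      ∑ i, (α i + 1 / (2 * γ) * ∑ j, max (M i j - β j - α i) 0 ^ 2) := by
  simp only [dualObjective, sum_add_distrib, mul_sum, sub_right_comm _ (α _)]
  ring

lemma continuous_dualObjective :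
    Continuous fun p : (ι → ℝ) × (ι → ℝ) => dualObjective γ M p.1 p.2 := by
  unfold dualObjective
  fun_prop

end DualObjective

section Existence

variable [DecidableEq ι] {γ : ℝ} (M : Matrix ι ι ℝ)

lemma uniform_mem_doublyStochastic [Nonempty ι] :
    (of fun _ _ => (Fintype.card ι : ℝ)⁻¹ : Matrix ι ι ℝ) ∈ doublyStochastic ℝ ι := by
  have hcard : (Fintype.card ι : ℝ) ≠ 0 := by positivity
  refine mem_doublyStochastic_iff_sum.2
    ⟨fun _ _ => inv_nonneg.2 (Nat.cast_nonneg _), fun _ => ?_, fun _ => ?_⟩ <;> simp [hcard]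

lemma exists_abs_add_le_of_dualObjective_zero_le [Nonempty ι] (hγ : 0 < γ) :
    ∃ R, ∀ α β : ι → ℝ, dualObjective γ M 0 0 ≤ dualObjective γ M α β →
      ∀ i j, |α i + β j| ≤ R := by
  set a : ℝ := (Fintype.card ι : ℝ)⁻¹
  have ha : 0 < a := by positivity
  set A₀ : Matrix ι ι ℝ := of fun _ _ => a
  set G := primalObjective γ M A₀ - dualObjective γ M 0 0
  refine ⟨G / a + γ * a + 1 + 2 * γ * G + ∑ i, ∑ j, |M i j|, fun α β hαβ i j => ?_⟩
  have hgap : fenchelGap γ a (M i j - α i - β j) ≤ G := by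
    calc fenchelGap γ a (M i j - α i - β j)
        ≤ ∑ i, ∑ j, fenchelGap γ (A₀ i j) (M i j - α i - β j) :=
          le_sum_sum_of_nonneg (f := fun i j => fenchelGap γ (A₀ i j) (M i j - α i - β j))
            (fun _ _ => fenchelGap_nonneg hγ ha.le _) i j
      _ = primalObjective γ M A₀ - dualObjective γ M α β :=
          (primalObjective_sub_dualObjective M uniform_mem_doublyStochastic α β).symm
      _ ≤ G := by linarith
  have hc := abs_le_of_fenchelGap_le hγ ha hgap
  have hM := le_sum_sum_of_nonneg (fun i j => abs_nonneg (M i j)) i j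
  calc |α i + β j| = |M i j - (M i j - α i - β j)| := by ring_nf
    _ ≤ |M i j| + |M i j - α i - β j| := abs_sub _ _
    _ ≤ _ := by linarith

lemma exists_forall_dualObjective_le [Nonempty ι] (hγ : 0 < γ) :
    ∃ α β : ι → ℝ, ∀ α' β', dualObjective γ M α' β' ≤ dualObjective γ M α β := by
  obtain ⟨R, hR⟩ := exists_abs_add_le_of_dualObjective_zero_le M hγ
  let i₀ : ι := Classical.arbitrary ι
  have hR0 : 0 ≤ R := (abs_nonneg _).trans (hR 0 0 le_rfl i₀ i₀)
  obtain ⟨p, -, hp⟩ := (isCompact_closedBall (0 : (ι → ℝ) × (ι → ℝ)) (2 * R)).exists_isMaxOn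
    ⟨0, by simpa using hR0⟩ (continuous_dualObjective M).continuousOn
  refine ⟨p.1, p.2, fun α β => ?_⟩
  rcases lt_or_ge (dualObjective γ M α β) (dualObjective γ M 0 0) with hlt | hle
  · exact hlt.le.trans (hp (a := 0) (by simpa using hR0))
  rw [← dualObjective_shift M α β (α i₀)]
  refine hp (a := (fun i => α i - α i₀, fun j => β j + α i₀)) ?_
  simp only [Metric.mem_closedBall, dist_zero_right, norm_prod_le_iff,
    pi_norm_le_iff_of_nonneg (by positivity : (0 : ℝ) ≤ 2 * R), Real.norm_eq_abs]
  refine ⟨fun i => ?_, fun j => ?_⟩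
  · have := hR α β hle i i₀
    have := hR α β hle i₀ i₀
    calc |α i - α i₀| = |(α i + β i₀) - (α i₀ + β i₀)| := by ring_nf
      _ ≤ _ := (abs_sub _ _).trans (by linarith)
  · have := hR α β hle i₀ j
    rw [add_comm]
    linarith

lemma sum_posPart_row_eq_of_isMax (hγ : 0 < γ) {α β : ι → ℝ}
    (hmax : ∀ α' β', dualObjective γ M α' β' ≤ dualObjective γ M α β) (i : ι) :
    ∑ j, max (M i j - α i - β j) 0 = γ := by
  rw [sum_congr rfl fun j _ => by rw [sub_right_comm]]
  refine sum_posPart_eq_of_forall_le (d := fun j => M i j - β j) hγ fun a => ?_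
  refine apply_le_of_forall_sum_le
    (g := fun i a => a + 1 / (2 * γ) * ∑ j, max (M i j - β j - a) 0 ^ 2) (fun y => ?_) i a
  have := hmax y β
  rw [dualObjective_eq_sub_sum_rows, dualObjective_eq_sub_sum_rows] at this
  linarith

lemma exists_sum_posPart_eq [Nonempty ι] (hγ : 0 < γ) :
    ∃ α β : ι → ℝ, (∀ i, ∑ j, max (M i j - α i - β j) 0 = γ) ∧
      ∀ j, ∑ i, max (M i j - α i - β j) 0 = γ := by
  obtain ⟨α, β, hmax⟩ := exists_forall_dualObjective_le M hγ
  refine ⟨α, β, sum_posPart_row_eq_of_isMax M hγ hmax, fun j => ?_⟩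
  have hmax' : ∀ β' α', dualObjective γ Mᵀ β' α' ≤ dualObjective γ Mᵀ β α := by
    simpa only [dualObjective_transpose] using fun β' α' => hmax α' β'
  simpa only [transpose_apply, sub_right_comm _ (β j)] using
    sum_posPart_row_eq_of_isMax Mᵀ hγ hmax' j

end Existence

section Recovery

variable [DecidableEq ι] {γ : ℝ} (M : Matrix ι ι ℝ) {α β : ι → ℝ}

lemma primalOfDual_mem_doublyStochastic (hγ : 0 < γ)
    (hrow : ∀ i, ∑ j, max (M i j - α i - β j) 0 = γ)
    (hcol : ∀ j, ∑ i, max (M i j - α i - β j) 0 = γ) :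
    primalOfDual γ M α β ∈ doublyStochastic ℝ ι := by
  refine mem_doublyStochastic_iff_sum.2 ⟨fun i j => div_nonneg (le_max_right _ _) hγ.le,
    fun i => ?_, fun j => ?_⟩
  · simp only [primalOfDual, of_apply, ← sum_div, hrow, div_self hγ.ne']
  · simp only [primalOfDual, of_apply, ← sum_div, hcol, div_self hγ.ne']

lemma primalObjective_primalOfDual (hγ : γ ≠ 0) (hA : primalOfDual γ M α β ∈ doublyStochastic ℝ ι) :
    primalObjective γ M (primalOfDual γ M α β) = dualObjective γ M α β := by
  rw [← sub_eq_zero, primalObjective_sub_dualObjective M hA]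
  exact sum_eq_zero fun i _ => sum_eq_zero fun j _ => fenchelGap_posPart_div hγ _

end Recovery

end Duality

/-- Strong duality for the quadratically regularized doubly stochastic projection:
the primal minimum equals the dual maximum. -/
theorem reg_projection_strong_duality (n : ℕ) (hn : 1 ≤ n) (γ : ℝ) (hγ : 0 < γ)
    (M : Matrix (Fin n) (Fin n) ℝ) :
    ∃ v : ℝ,
      IsLeast {t : ℝ | ∃ A : Matrix (Fin n) (Fin n) ℝ, IsDoublyStochastic A ∧
        t = (∑ i, ∑ j, (-(M i j)) * A i j) + (γ/2) * ∑ i, ∑ j, (A i j)^2} v ∧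
      IsGreatest {t : ℝ | ∃ α β : Fin n → ℝ,
        t = (-(∑ i, (α i + β i)))
            - (1/(2*γ)) * ∑ i, ∑ j, (max (M i j - α i - β j) 0)^2} v := by
  have : Nonempty (Fin n) := ⟨⟨0, hn⟩⟩
  obtain ⟨α, β, hrow, hcol⟩ := exists_sum_posPart_eq M hγ
  have hA := primalOfDual_mem_doublyStochastic M hγ hrow hcol
  have hopt := primalObjective_primalOfDual M hγ.ne' hA
  refine ⟨dualObjective γ M α β, ⟨⟨_, mem_doublyStochastic_iff_sum.1 hA, hopt.symm⟩, ?_⟩,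
    ⟨⟨α, β, rfl⟩, ?_⟩⟩
  · rintro t ⟨A, hA', rfl⟩
    exact dualObjective_le_primalObjective M hγ (mem_doublyStochastic_iff_sum.2 hA') α β
  · rintro t ⟨α', β', rfl⟩
    exact hopt ▸ dualObjective_le_primalObjective M hγ hA α' β'
end

section
/- If (α, β) ∈ ℝⁿ × ℝⁿ are such that A := (1/γ)[M − α1ᵀ − 1βᵀ]₊ is doubly stochastic, then A is the unique minimizer of ⟨−M, A⟩ + (γ/2)‖A‖_F² over A ∈ Ω_n. -/
open Finset

variable {ι κ : Type*} [Fintype ι] [Fintype κ]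

noncomputable def regObjective (γ : ℝ) (M B : Matrix ι κ ℝ) : ℝ :=
  ∑ i, ∑ j, (-(M i j)) * B i j + (γ / 2) * ∑ i, ∑ j, (B i j) ^ 2

theorem regObjective_sub_regObjective (γ : ℝ) (M A B : Matrix ι κ ℝ) :
    regObjective γ M B - regObjective γ M A =
      ∑ i, ∑ j, (γ * A i j - M i j) * (B i j - A i j) +
        (γ / 2) * ∑ i, ∑ j, (B i j - A i j) ^ 2 := by
  simp only [regObjective, mul_sum, ← sum_add_distrib, ← sum_sub_distrib]
  exact sum_congr rfl fun i _ => sum_congr rfl fun j _ => by ring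

theorem eq_of_sum_sum_sq_sub_eq_zero {A B : Matrix ι κ ℝ}
    (h : ∑ i, ∑ j, (B i j - A i j) ^ 2 = 0) : B = A := by
  have hrow := (Fintype.sum_eq_zero_iff_of_nonneg fun i =>
    sum_nonneg fun j _ => sq_nonneg (B i j - A i j)).mp h
  ext i j
  have hij := (Fintype.sum_eq_zero_iff_of_nonneg fun j => sq_nonneg (B i j - A i j)).mp
    (congrFun hrow i)
  exact sub_eq_zero.mp (pow_eq_zero_iff two_ne_zero |>.mp (congrFun hij j))

theorem sum_sum_add_mul_sub_eq_zero {A B : Matrix ι κ ℝ} (α : ι → ℝ) (β : κ → ℝ)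
    (hrow : ∀ i, ∑ j, A i j = ∑ j, B i j) (hcol : ∀ j, ∑ i, A i j = ∑ i, B i j) :
    ∑ i, ∑ j, (α i + β j) * (B i j - A i j) = 0 := by
  simp only [add_mul, mul_sub, sum_add_distrib, sum_sub_distrib]
  rw [sum_comm (f := fun i j => β j * B i j), sum_comm (f := fun i j => β j * A i j)]
  simp only [← mul_sum, hrow, hcol, sub_self]

theorem max_sub_self_mul_max_eq_zero (x : ℝ) : (max x 0 - x) * max x 0 = 0 := by
  rcases le_total x 0 with hx | hx
  · rw [max_eq_right hx, mul_zero]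
  · rw [max_eq_left hx, sub_self, zero_mul]

theorem sum_sum_grad_mul_sub_nonneg {γ : ℝ} (hγ : 0 < γ) {M A B : Matrix ι κ ℝ}
    {α : ι → ℝ} {β : κ → ℝ} (hA : ∀ i j, A i j = (1 / γ) * max (M i j - α i - β j) 0)
    (hB : ∀ i j, 0 ≤ B i j)
    (hrow : ∀ i, ∑ j, A i j = ∑ j, B i j) (hcol : ∀ j, ∑ i, A i j = ∑ i, B i j) :
    0 ≤ ∑ i, ∑ j, (γ * A i j - M i j) * (B i j - A i j) := by
  set S : ι → κ → ℝ := fun i j => max (M i j - α i - β j) 0 - (M i j - α i - β j)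
  have hγA : ∀ i j, γ * A i j = max (M i j - α i - β j) 0 := fun i j => by
    rw [hA, one_div, mul_inv_cancel_left₀ hγ.ne']
  have hsplit : ∀ i j, (γ * A i j - M i j) * (B i j - A i j) =
      S i j * B i j - (1 / γ) * (S i j * max (M i j - α i - β j) 0) -
        (α i + β j) * (B i j - A i j) := fun i j => by
    rw [hA i j]
    field_simp
    ring
  simp only [hsplit, S, max_sub_self_mul_max_eq_zero, mul_zero, sub_zero, sum_sub_distrib,
    sum_sum_add_mul_sub_eq_zero α β hrow hcol]
  exact sum_nonneg fun i _ => sum_nonneg fun j _ =>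
    mul_nonneg (sub_nonneg.mpr (le_max_left _ _)) (hB i j)

/-- If dual variables `(α, β)` yield a doubly stochastic `A = (1/γ)[M - α1ᵀ - 1βᵀ]₊`,
then `A` is the unique minimizer of the regularized projection problem. -/
theorem dual_certificate_optimal (n : ℕ) (γ : ℝ) (hγ : 0 < γ)
    (M : Matrix (Fin n) (Fin n) ℝ) (α β : Fin n → ℝ)
    (A : Matrix (Fin n) (Fin n) ℝ)
    (hA : ∀ i j, A i j = (1/γ) * max (M i j - α i - β j) 0)
    (hDS : IsDoublyStochastic A) :
    ∀ B, IsDoublyStochastic B →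
      ((∑ i, ∑ j, (-(M i j)) * A i j) + (γ/2) * ∑ i, ∑ j, (A i j)^2 ≤
        (∑ i, ∑ j, (-(M i j)) * B i j) + (γ/2) * ∑ i, ∑ j, (B i j)^2) ∧
      (((∑ i, ∑ j, (-(M i j)) * B i j) + (γ/2) * ∑ i, ∑ j, (B i j)^2 ≤
        (∑ i, ∑ j, (-(M i j)) * A i j) + (γ/2) * ∑ i, ∑ j, (A i j)^2) → B = A) := by
  intro B ⟨hB, hBrow, hBcol⟩
  obtain ⟨-, hArow, hAcol⟩ := hDS
  have hgrad := sum_sum_grad_mul_sub_nonneg hγ hA hB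
    (fun i => (hArow i).trans (hBrow i).symm) (fun j => (hAcol j).trans (hBcol j).symm)
  have hdiff := regObjective_sub_regObjective γ M A B
  have hdist : 0 ≤ ∑ i, ∑ j, (B i j - A i j) ^ 2 :=
    sum_nonneg fun i _ => sum_nonneg fun j _ => sq_nonneg _
  simp only [regObjective] at hdiff
  refine ⟨by nlinarith, fun hle => eq_of_sum_sum_sq_sub_eq_zero ?_⟩
  nlinarith
end
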